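/- arXiv:1805.07876 — 2 statements merged into one kernel-verified Lean document; each statement's English description precedes it below -/
import Mathlib

section
/- Let K ≥ 1, R > 1, and η = 1/(R^K + R^{−K}). For each bit vector m ∈ {0,1}^K, the unique (up to global phase) unit-norm Huffman sequence x ∈ ℂ^{K+1} whose z-transform has zeros α_k = R^{2m_k−1} e^{2πi(k−1)/K} and whose autocorrelation equals a_k = −η for k ∈ {0, 2K}, a_K = 1, a_k = 0 otherwise, has last and first coefficients of moduli |x_K|² = R^{−2‖m‖₁}/(1 + R^{−2K}) and |x_0|² = R^{2‖m‖₁}/(1 + R^{2K}). -/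
/-!
Evaluating the factorisation `X(z) = x_K ∏ (z - α_k)` and the autocorrelation identity
`X(z) X*(z) = A(z)` at `z = 0` gives `x_0 = (-1)^K x_K ∏ α_k` and `x_0 conj(x_K) = -η`.
Since the `K`-th roots of unity multiply to `(-1)^(K-1)`, the zeros multiply to
`R^(2‖m‖₁-K) (-1)^(K-1)`, so `|x_0| = R^(2‖m‖₁-K) |x_K|` and `|x_0| |x_K| = η`;
these two relations determine both moduli.
-/

open Complex Finset
open scoped Real

theorem Finset.prod_zpow_eq_zpow_sum₀ {ι G₀ : Type*} [CommGroupWithZero G₀] {a : G₀} (ha : a ≠ 0)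
    (s : Finset ι) (f : ι → ℤ) : ∏ i ∈ s, a ^ f i = a ^ ∑ i ∈ s, f i := by
  classical
  induction s using Finset.induction_on with
  | empty => simp
  | insert _ _ hi ih => rw [prod_insert hi, sum_insert hi, zpow_add₀ ha, ih]

theorem Fin.sum_mul_zero_pow {R : Type*} [Semiring R] (n : ℕ) (f : Fin (n + 1) → R) :
    ∑ k : Fin (n + 1), f k * (0 : R) ^ (k : ℕ) = f 0 := by
  simp [Fin.sum_univ_succ]

theorem Complex.prod_exp_two_pi_I_mul_div (K : ℕ) :
    ∏ k : Fin K, exp (2 * (π : ℂ) * I * k / K) = (-1) ^ (K - 1) := by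
  rcases K.eq_zero_or_pos with rfl | hK
  · simp
  have hgauss : (∑ k ∈ range K, (k : ℂ)) * 2 = K * (K - 1 : ℕ) := by
    simpa using congrArg (Nat.cast : ℕ → ℂ) (sum_range_id_mul_two K)
  have hsum : ∑ k : Fin K, 2 * (π : ℂ) * I * k / K = (K - 1 : ℕ) * (π * I) := by
    rw [← sum_div, ← mul_sum, Fin.sum_univ_eq_sum_range (fun k => (k : ℂ)) K]
    have hK0 : (K : ℂ) ≠ 0 := by exact_mod_cast hK.ne'
    field_simp
    linear_combination hgauss
  rw [← exp_sum, hsum, exp_nat_mul, exp_pi_mul_I]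

theorem prod_huffman_zeros (K : ℕ) {r : ℂ} (hr : r ≠ 0) (m : Fin K → ℕ) :
    ∏ k : Fin K, r ^ (2 * (m k : ℤ) - 1) * exp (2 * (π : ℂ) * I * k / K) =
      r ^ (2 * ∑ k, (m k : ℤ) - K) * (-1) ^ (K - 1) := by
  rw [prod_mul_distrib, prod_exp_two_pi_I_mul_div, prod_zpow_eq_zpow_sum₀ hr, sum_sub_distrib,
    ← mul_sum]
  simp

theorem sq_eq_of_mul_eq_of_eq_zpow_mul {R : ℝ} (hR : 0 < R) (K : ℕ) (S : ℤ) {a b : ℝ}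
    (hab : a * b = 1 / (R ^ K + R ^ (-(K : ℤ)))) (ha : a = R ^ (2 * S - K) * b) :
    b ^ 2 = R ^ (-(2 * S)) / (1 + R ^ (-(2 * (K : ℤ)))) ∧
      a ^ 2 = R ^ (2 * S) / (1 + R ^ (2 * (K : ℤ))) := by
  have hRS : R ^ S ≠ 0 := zpow_ne_zero _ hR.ne'
  have hRK : R ^ K ≠ 0 := pow_ne_zero _ hR.ne'
  subst ha
  simp only [zpow_sub₀ hR.ne', zpow_neg, mul_comm (2 : ℤ), zpow_mul, zpow_natCast] at hab ⊢
  field_simp at hab ⊢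
  exact ⟨by linear_combination hab, by linear_combination hab⟩

theorem stmt7 (K : ℕ) (hK : 1 ≤ K) (R : ℝ) (hR : 1 < R)
    (η : ℝ) (hη : η = 1 / (R ^ K + R ^ (-(K:ℤ))))
    (m : Fin K → ℕ)
    (α : Fin K → ℂ)
    (hα : ∀ k : Fin K, α k = (R:ℂ) ^ (2 * (m k : ℤ) - 1) *
      Complex.exp (2 * (Real.pi:ℂ) * Complex.I * (k:ℕ) / K))
    (x : Fin (K+1) → ℂ)
    (hfact : ∀ z : ℂ, ∑ k : Fin (K+1), x k * z ^ (k:ℕ) =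
      x ⟨K, Nat.lt_succ_self K⟩ * ∏ k : Fin K, (z - α k))
    (hauto : ∀ z : ℂ,
      (∑ k : Fin (K+1), x k * z ^ (k:ℕ)) *
      (∑ k : Fin (K+1), (starRingEnd ℂ) (x ⟨K - (k:ℕ), by omega⟩) * z ^ (k:ℕ)) =
      -(η:ℂ) + z ^ K - (η:ℂ) * z ^ (2*K)) :
    ‖x ⟨K, Nat.lt_succ_self K⟩‖ ^ 2 =
      R ^ (-(2 * ∑ k : Fin K, (m k : ℤ))) / (1 + R ^ (-(2 * (K:ℤ)))) ∧
    ‖x 0‖ ^ 2 =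
      R ^ (2 * ∑ k : Fin K, (m k : ℤ)) / (1 + R ^ (2 * (K:ℤ))) := by
  have hR0 : 0 < R := one_pos.trans hR
  set S : ℤ := ∑ k : Fin K, (m k : ℤ)
  set xK := x ⟨K, Nat.lt_succ_self K⟩
  have hprod : ∏ k, α k = (R : ℂ) ^ (2 * S - K) * (-1) ^ (K - 1) := by
    simp only [hα]
    exact prod_huffman_zeros K (by exact_mod_cast hR0.ne') m
  have hlead : x 0 = -((R : ℂ) ^ (2 * S - K)) * xK := by
    have h := hfact 0
    simp only [Fin.sum_mul_zero_pow, zero_sub, prod_neg, card_univ, Fintype.card_fin, hprod] at h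
    have hsign : (-1 : ℂ) ^ K * (-1) ^ (K - 1) = -1 := by
      rw [← pow_add, Odd.neg_one_pow ⟨K - 1, by omega⟩]
    linear_combination h + (R : ℂ) ^ (2 * S - K) * xK * hsign
  have hends : x 0 * starRingEnd ℂ xK = -η := by
    have h := hauto 0
    rw [Fin.sum_mul_zero_pow, Fin.sum_mul_zero_pow, zero_pow (by omega), zero_pow (by omega)] at h
    simpa using h
  have hη0 : 0 < η := by rw [hη]; positivity
  have hnorm_lead : ‖x 0‖ = R ^ (2 * S - K) * ‖xK‖ := by
    rw [hlead, norm_mul, norm_neg, norm_zpow, Complex.norm_real, Real.norm_of_nonneg hR0.le]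
  have hnorm_ends : ‖x 0‖ * ‖xK‖ = η := by
    simpa [abs_of_pos hη0] using congrArg norm hends
  exact sq_eq_of_mul_eq_of_eq_zpow_mul hR0 K S (hnorm_ends.trans hη) hnorm_lead
end

section
/- Let x ∈ ℂ^{K+1} be a Huffman sequence, i.e., its autocorrelation a = x ∗ conj(x⁻) satisfies a_K = 1, a_0 = a_{2K} = −η, and a_k = 0 otherwise, with 0 < η < 1/2. Let X ∈ ℂ^{N×L} be the banded Toeplitz convolution matrix of x with L ≤ K. Then X*X = I_L (the columns of X are orthonormal). -/
open Matrix Finset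

theorem stmt13 (K L N : ℕ) (hL : 1 ≤ L) (hLK : L ≤ K) (hN : N = K + L)
    (η : ℝ) (hη0 : 0 < η) (hη : η < 1/2)
    (x : Fin (K+1) → ℂ)
    (a : Fin (2*K+1) → ℂ)
    (ha : ∀ j : Fin (2*K+1), a j = ∑ i : Fin (K+1), ∑ k : Fin (K+1),
      if (i:ℕ) + (k:ℕ) = (j:ℕ) then x i * (starRingEnd ℂ) (x ⟨K - (k:ℕ), by omega⟩) else 0)
    (haK : a ⟨K, by omega⟩ = 1)
    (ha0 : a ⟨0, by omega⟩ = -(η:ℂ))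
    (ha2K : a ⟨2*K, by omega⟩ = -(η:ℂ))
    (hzero : ∀ j : Fin (2*K+1), (j:ℕ) ≠ 0 → (j:ℕ) ≠ K → (j:ℕ) ≠ 2*K → a j = 0)
    (X : Matrix (Fin N) (Fin L) ℂ)
    (hX : ∀ (i : Fin N) (l : Fin L), X i l =
      if h : (l:ℕ) ≤ (i:ℕ) ∧ (i:ℕ) - (l:ℕ) ≤ K then x ⟨(i:ℕ) - (l:ℕ), by omega⟩ else 0) :
    Xᴴ * X = 1 := by
  set x' : ℕ → ℂ := fun n => if h : n ≤ K then x ⟨n, by omega⟩ else 0 with hx'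
  have hx'eq : ∀ (n : ℕ) (h : n ≤ K), x' n = x ⟨n, by omega⟩ := by
    intro n h; simp [hx', h]
  ext l m
  rw [Matrix.mul_apply]
  have hlL : (l:ℕ) < L := l.isLt
  have hmL : (m:ℕ) < L := m.isLt
  have hj : K + (l:ℕ) - (m:ℕ) < 2*K+1 := by omega
  have key : (∑ i : Fin N, (Xᴴ) l i * X i m) = a ⟨K + (l:ℕ) - (m:ℕ), hj⟩ := by
    set F : ℕ → ℂ := fun i =>
          (if (l:ℕ) ≤ i ∧ i ≤ K + (l:ℕ) then (starRingEnd ℂ) (x' (i - (l:ℕ))) else 0) *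
          (if (m:ℕ) ≤ i ∧ i ≤ K + (m:ℕ) then x' (i - (m:ℕ)) else 0) with hF
    have hFa : ∀ i : ℕ, F i =
          (if (l:ℕ) ≤ i ∧ i ≤ K + (l:ℕ) then (starRingEnd ℂ) (x' (i - (l:ℕ))) else 0) *
          (if (m:ℕ) ≤ i ∧ i ≤ K + (m:ℕ) then x' (i - (m:ℕ)) else 0) := fun i => rfl
    have hterm : ∀ i : Fin N, (Xᴴ) l i * X i m = F (i:ℕ) := by
      intro i
      rw [Matrix.conjTranspose_apply, hX i l, hX i m, hFa]
      congr 1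
      · split_ifs with h1 h2 h2
        · rw [hx'eq _ (by omega)]; rfl
        · exfalso; omega
        · exfalso; omega
        · simp
      · split_ifs with h1 h2 h2
        · rw [hx'eq _ (by omega)]
        · exfalso; omega
        · exfalso; omega
        · rfl
    rw [Finset.sum_congr rfl (fun i _ => hterm i), Fin.sum_univ_eq_sum_range F N]
    have hsub : Finset.Ico (m:ℕ) ((m:ℕ) + (K+1)) ⊆ Finset.range N := by
      intro i hi
      simp only [Finset.mem_Ico] at hi
      simp only [Finset.mem_range]
      omega
    rw [← Finset.sum_subset hsub (by
      intro i _ hi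
      simp only [Finset.mem_Ico] at hi
      have hneg : ¬ ((m:ℕ) ≤ i ∧ i ≤ K + (m:ℕ)) := by omega
      rw [hFa, if_neg hneg, mul_zero])]
    rw [Finset.sum_Ico_eq_sum_range]
    simp only [Nat.add_sub_cancel_left]
    rw [ha]
    set G : ℕ → ℂ := fun p =>
        if p ≤ K + (l:ℕ) - (m:ℕ) ∧ (K + (l:ℕ) - (m:ℕ)) - p ≤ K then
            x' p * (starRingEnd ℂ) (x' (K - ((K + (l:ℕ) - (m:ℕ)) - p))) else 0 with hG
    have hGa : ∀ p : ℕ, G p =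
        if p ≤ K + (l:ℕ) - (m:ℕ) ∧ (K + (l:ℕ) - (m:ℕ)) - p ≤ K then
            x' p * (starRingEnd ℂ) (x' (K - ((K + (l:ℕ) - (m:ℕ)) - p))) else 0 := fun p => rfl
    have inner : ∀ p : Fin (K+1),
        (∑ k : Fin (K+1), if (p:ℕ) + (k:ℕ) = ((⟨K + (l:ℕ) - (m:ℕ), hj⟩ : Fin (2*K+1)):ℕ) then
            x p * (starRingEnd ℂ) (x ⟨K - (k:ℕ), by omega⟩) else 0) =
        G (p:ℕ) := by
      intro p
      rw [hGa]
      split_ifs with h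
      · rw [Finset.sum_eq_single (⟨(K + (l:ℕ) - (m:ℕ)) - (p:ℕ), by omega⟩ : Fin (K+1))]
        · have hc : (p:ℕ) + (((⟨(K + (l:ℕ) - (m:ℕ)) - (p:ℕ), by omega⟩ : Fin (K+1))):ℕ)
              = ((⟨K + (l:ℕ) - (m:ℕ), hj⟩ : Fin (2*K+1)):ℕ) := by
            simp only
            omega
          rw [if_pos hc, hx'eq _ (by omega), hx'eq _ (by omega)]
        · intro k _ hk
          rw [if_neg]
          intro hc
          apply hk
          apply Fin.ext
          simp only at hc ⊢
          omega
        · intro h'; exact absurd (Finset.mem_univ _) h'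
      · apply Finset.sum_eq_zero
        intro k _
        rw [if_neg]
        intro hc
        simp only at hc
        exact h (by constructor <;> omega)
    rw [Finset.sum_congr rfl (fun p _ => inner p), Fin.sum_univ_eq_sum_range G (K+1)]
    apply Finset.sum_congr rfl
    intro p hp
    simp only [Finset.mem_range] at hp
    have hc1 : (m:ℕ) ≤ (m:ℕ) + p ∧ (m:ℕ) + p ≤ K + (m:ℕ) := by omega
    rw [hFa, hGa, if_pos hc1, Nat.add_sub_cancel_left]
    split_ifs with h1 h2 h2
    · have : K - ((K + (l:ℕ) - (m:ℕ)) - p) = (m:ℕ) + p - (l:ℕ) := by omega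
      rw [this]
      ring
    · exfalso; omega
    · exfalso; omega
    · ring
  rw [key]
  by_cases h : l = m
  · subst h
    rw [Matrix.one_apply_eq]
    have : (⟨K + (l:ℕ) - (l:ℕ), hj⟩ : Fin (2*K+1)) = ⟨K, by omega⟩ := by
      apply Fin.ext; simp
    rw [this, haK]
  · have hlm : (l:ℕ) ≠ (m:ℕ) := fun hc => h (Fin.ext hc)
    rw [Matrix.one_apply_ne h]
    apply hzero <;> simp only <;> omega
end
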